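/- arXiv:1703.06529 — 3 statements merged into one kernel-verified Lean document; each statement's English description precedes it below -/
import Mathlib

section
/- For all real numbers s, r, t with 0 ≤ r ≤ r + s ≤ t, we have log⁺(r+s) − ((t−(r+s))/(t−r))·log⁺ r − (s/(t−r))·log⁺ t ≥ −1, where log⁺ x = log(max(x,1)). -/
/-!
Since `max x 1 ≤ 1 + x ≤ 2 max x 1` for `x ≥ 0`, `log⁺` lies within `log 2 < 1` below the concave
function `x ↦ log (1 + x)`. Writing `r + s` as the convex combination of `r` and `t` with weights
`(t - (r + s)) / (t - r)` and `s / (t - r)`, concavity of `log (1 + ·)` gives the bound.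
-/

open Real

/-- `log⁺ x = log (max x 1)`. -/
noncomputable def logPlus (x : ℝ) : ℝ := Real.log (max x 1)

lemma logPlus_nonneg (x : ℝ) : 0 ≤ logPlus x :=
  log_nonneg (le_max_right x 1)

lemma logPlus_le_log_one_add {x : ℝ} (hx : 0 ≤ x) : logPlus x ≤ log (1 + x) :=
  log_le_log (by positivity) (max_le (by linarith) (by linarith))

lemma log_one_add_le_logPlus_add_log_two {x : ℝ} (hx : -1 < x) :
    log (1 + x) ≤ logPlus x + log 2 := by
  have hmax : 0 < max x 1 := lt_max_of_lt_right one_pos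
  rw [logPlus, ← log_mul hmax.ne' two_ne_zero]
  exact log_le_log (by linarith) (by linarith [le_max_left x 1, le_max_right x 1])

lemma concaveOn_log_one_add : ConcaveOn ℝ (Set.Ioi (-1)) fun x : ℝ ↦ log (1 + x) := by
  refine ⟨convex_Ioi _, fun x hx y hy a b ha hb hab ↦ ?_⟩
  rw [Set.mem_Ioi] at hx hy
  have hlog := strictConcaveOn_log_Ioi.concaveOn.2
    (show 0 < 1 + x by linarith) (show 0 < 1 + y by linarith) ha hb hab
  convert hlog using 2
  simp only [smul_eq_mul]
  linear_combination -hab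

lemma weighted_logPlus_le_logPlus_add_log_two {x y a b : ℝ} (hx : 0 ≤ x) (hy : 0 ≤ y)
    (ha : 0 ≤ a) (hb : 0 ≤ b) (hab : a + b = 1) :
    a * logPlus x + b * logPlus y ≤ logPlus (a * x + b * y) + log 2 :=
  calc a * logPlus x + b * logPlus y ≤ a * log (1 + x) + b * log (1 + y) := by
        gcongr <;> exact logPlus_le_log_one_add ‹_›
    _ ≤ log (1 + (a * x + b * y)) :=
        concaveOn_log_one_add.2 (show -1 < x by linarith) (show -1 < y by linarith) ha hb hab
    _ ≤ logPlus (a * x + b * y) + log 2 :=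
        log_one_add_le_logPlus_add_log_two (by linarith [mul_nonneg ha hx, mul_nonneg hb hy])

/-- Lower bound half of the elementary interpolation inequality for `log⁺`. -/
theorem logPlus_interpolation_lower_bound (s r t : ℝ)
    (hr : 0 ≤ r) (hs : r ≤ r + s) (ht : r + s ≤ t) :
    -1 ≤ logPlus (r + s) - ((t - (r + s)) / (t - r)) * logPlus r
        - (s / (t - r)) * logPlus t := by
  rcases (hs.trans ht).eq_or_lt with hrt | hrt
  · obtain rfl : s = 0 := by linarith
    subst hrt
    simp only [sub_self, div_zero, zero_mul, sub_zero]
    linarith [logPlus_nonneg (r + 0)]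
  have hd : 0 < t - r := by linarith
  have hbound := weighted_logPlus_le_logPlus_add_log_two (a := (t - (r + s)) / (t - r))
    (b := s / (t - r)) hr (by linarith) (div_nonneg (by linarith) hd.le)
    (div_nonneg (by linarith) hd.le) (by field_simp; ring)
  have hcomb : (t - (r + s)) / (t - r) * r + s / (t - r) * t = r + s := by
    field_simp; ring
  rw [hcomb] at hbound
  linarith [log_two_lt_d9]
end

section
/- There exists a constant C > 0 such that for all v ≥ 1 and all η ∈ (0,1] and M ≥ 0, ∫_0^∞ (e^{−v²/(16s)} + e^{−v/2})/(√s·(s+1)) · (1_{s ∉ [η v², v²/η]} + e^{−M}·1_{s ∈ [η v², v²/η]}) ds ≤ C·(e^{−v/2} + 1/v·(1 + e^{−M}/√η + √η)). -/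
/-!
Since `M ≥ 0`, the window weight lies in `[0, 1]`, so the integral is at most
`∫ (e^{-v²/(16s)} + e^{-v/2}) k(s) ds` with `k(s) = 1/(√s (s+1))`. The kernel satisfies
`k(s) ≤ s^{-1/2}` and `k(s) ≤ s^{-3/2}`, hence `∫ k ≤ 4` (split at `1`). For the first term,
`e^{-x} ≤ 1/x` gives `e^{-v²/(16s)} k(s) ≤ 16 v⁻² s^{-1/2}` on `(0, v²]`, contributing `32/v`,
while on `(v², ∞)` the bound `k(s) ≤ s^{-3/2}` contributes `2/v`. Altogether the integral is at
most `34/v + 4 e^{-v/2}`.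
-/

open Real MeasureTheory Set

lemma exp_neg_le_inv {x : ℝ} (hx : 0 < x) : exp (-x) ≤ x⁻¹ := by
  rw [exp_neg]
  exact inv_anti₀ hx (by linarith [add_one_le_exp x])

lemma inv_sqrt_eq_rpow {s : ℝ} (hs : 0 ≤ s) : (√s)⁻¹ = s ^ (-(1 / 2 : ℝ)) := by
  rw [rpow_neg hs, sqrt_eq_rpow]

lemma integral_Ioc_zero_rpow_neg_half {b : ℝ} (hb : 0 ≤ b) :
    ∫ s in Ioc 0 b, s ^ (-(1 / 2 : ℝ)) = 2 * √b := by
  rw [← intervalIntegral.integral_of_le hb, integral_rpow (Or.inl (by norm_num)),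
    sqrt_eq_rpow, zero_rpow (by norm_num)]
  norm_num
  ring

lemma integral_Ioi_rpow_neg_three_halves {a : ℝ} (ha : 0 < a) :
    ∫ s in Ioi a, s ^ (-(3 / 2 : ℝ)) = 2 / √a := by
  rw [integral_Ioi_rpow_of_lt (by norm_num) ha, sqrt_eq_rpow,
    show -(3 / 2 : ℝ) + 1 = -(1 / 2) by norm_num, rpow_neg ha.le]
  field_simp

section SplitAtPoint

variable {f g h : ℝ → ℝ} {a b : ℝ}

lemma integrableOn_Ioi_of_le_on_Ioc_Ioi (hab : a ≤ b)
    (hf : AEStronglyMeasurable f (volume.restrict (Ioi a))) (hf0 : ∀ s ∈ Ioi a, 0 ≤ f s)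
    (hg : IntegrableOn g (Ioc a b)) (hh : IntegrableOn h (Ioi b))
    (hfg : ∀ s ∈ Ioc a b, f s ≤ g s) (hfh : ∀ s ∈ Ioi b, f s ≤ h s) :
    IntegrableOn f (Ioi a) := by
  have of_le {S : Set ℝ} {k : ℝ → ℝ} (hS : S ⊆ Ioi a) (hSm : MeasurableSet S)
      (hk : IntegrableOn k S) (hfk : ∀ s ∈ S, f s ≤ k s) : IntegrableOn f S := by
    refine hk.mono' (hf.mono_set hS) ((ae_restrict_iff' hSm).2 (ae_of_all _ fun s hs => ?_))
    rw [norm_of_nonneg (hf0 s (hS hs))]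
    exact hfk s hs
  rw [← Ioc_union_Ioi_eq_Ioi hab]
  exact (of_le Ioc_subset_Ioi_self measurableSet_Ioc hg hfg).union
    (of_le (Ioi_subset_Ioi hab) measurableSet_Ioi hh hfh)

lemma setIntegral_Ioi_le_of_le_on_Ioc_Ioi (hab : a ≤ b)
    (hf : AEStronglyMeasurable f (volume.restrict (Ioi a))) (hf0 : ∀ s ∈ Ioi a, 0 ≤ f s)
    (hg : IntegrableOn g (Ioc a b)) (hh : IntegrableOn h (Ioi b))
    (hfg : ∀ s ∈ Ioc a b, f s ≤ g s) (hfh : ∀ s ∈ Ioi b, f s ≤ h s) :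
    ∫ s in Ioi a, f s ≤ (∫ s in Ioc a b, g s) + ∫ s in Ioi b, h s := by
  have hfi := integrableOn_Ioi_of_le_on_Ioc_Ioi hab hf hf0 hg hh hfg hfh
  rw [← Ioc_union_Ioi_eq_Ioi hab, setIntegral_union Ioc_disjoint_Ioi_same measurableSet_Ioi
    (hfi.mono_set Ioc_subset_Ioi_self) (hfi.mono_set (Ioi_subset_Ioi hab))]
  exact add_le_add
    (setIntegral_mono_on (hfi.mono_set Ioc_subset_Ioi_self) hg measurableSet_Ioc hfg)
    (setIntegral_mono_on (hfi.mono_set (Ioi_subset_Ioi hab)) hh measurableSet_Ioi hfh)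

end SplitAtPoint

lemma inv_sqrt_mul_add_one_le_rpow_neg_half {s : ℝ} (hs : 0 < s) :
    (√s * (s + 1))⁻¹ ≤ s ^ (-(1 / 2 : ℝ)) := by
  rw [← inv_sqrt_eq_rpow hs.le]
  exact inv_anti₀ (sqrt_pos.2 hs) (le_mul_of_one_le_right (sqrt_nonneg s) (by linarith))

lemma inv_sqrt_mul_add_one_le_rpow_neg_three_halves {s : ℝ} (hs : 0 < s) :
    (√s * (s + 1))⁻¹ ≤ s ^ (-(3 / 2 : ℝ)) := by
  have h32 : s ^ (3 / 2 : ℝ) = √s * s := by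
    rw [show (3 / 2 : ℝ) = 1 / 2 + 1 by norm_num, rpow_add hs, rpow_one, sqrt_eq_rpow]
  rw [rpow_neg hs.le, h32]
  exact inv_anti₀ (by positivity) (by gcongr; linarith)

lemma mul_inv_sqrt_mul_add_one_le_rpow_neg_half {s : ℝ} (hs : 0 < s) :
    s * (√s * (s + 1))⁻¹ ≤ s ^ (-(1 / 2 : ℝ)) := by
  have hsq := sqrt_pos.2 hs
  rw [← inv_sqrt_eq_rpow hs.le, ← div_eq_mul_inv, div_le_iff₀ (by positivity)]
  field_simp
  nlinarith [sq_sqrt hs.le]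

lemma integrableOn_inv_sqrt_mul_add_one_and_integral_le :
    IntegrableOn (fun s : ℝ => (√s * (s + 1))⁻¹) (Ioi 0) ∧
      ∫ s in Ioi (0 : ℝ), (√s * (s + 1))⁻¹ ≤ 4 := by
  have hmeas : AEStronglyMeasurable (fun s : ℝ => (√s * (s + 1))⁻¹) (volume.restrict (Ioi 0)) :=
    (by fun_prop : Measurable fun s : ℝ => (√s * (s + 1))⁻¹).aestronglyMeasurable
  have hnonneg : ∀ s ∈ Ioi (0 : ℝ), 0 ≤ (√s * (s + 1))⁻¹ := fun s (hs : 0 < s) => by positivity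
  have hg := (intervalIntegral.intervalIntegrable_rpow' (r := -(1 / 2 : ℝ)) (by norm_num)
    (a := 0) (b := 1)).1
  have hh := integrableOn_Ioi_rpow_of_lt (a := -(3 / 2 : ℝ)) (by norm_num) one_pos
  have hle_g : ∀ s ∈ Ioc (0 : ℝ) 1, (√s * (s + 1))⁻¹ ≤ s ^ (-(1 / 2 : ℝ)) :=
    fun s hs => inv_sqrt_mul_add_one_le_rpow_neg_half hs.1
  have hle_h : ∀ s ∈ Ioi (1 : ℝ), (√s * (s + 1))⁻¹ ≤ s ^ (-(3 / 2 : ℝ)) :=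
    fun s hs => inv_sqrt_mul_add_one_le_rpow_neg_three_halves (one_pos.trans hs)
  refine ⟨integrableOn_Ioi_of_le_on_Ioc_Ioi zero_le_one hmeas hnonneg hg hh hle_g hle_h, ?_⟩
  refine (setIntegral_Ioi_le_of_le_on_Ioc_Ioi zero_le_one hmeas hnonneg hg hh hle_g
    hle_h).trans_eq ?_
  rw [integral_Ioc_zero_rpow_neg_half zero_le_one, integral_Ioi_rpow_neg_three_halves one_pos]
  norm_num

lemma integrableOn_exp_neg_sq_div_mul_inv_sqrt_mul_add_one_and_integral_le {c v : ℝ}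
    (hc : 0 < c) (hv : 0 < v) :
    IntegrableOn (fun s : ℝ => exp (-(v ^ 2 / (c * s))) * (√s * (s + 1))⁻¹) (Ioi 0) ∧
      ∫ s in Ioi (0 : ℝ), exp (-(v ^ 2 / (c * s))) * (√s * (s + 1))⁻¹ ≤ (2 * c + 2) / v := by
  have hv2 : 0 < v ^ 2 := by positivity
  have hmeas : AEStronglyMeasurable (fun s : ℝ => exp (-(v ^ 2 / (c * s))) * (√s * (s + 1))⁻¹)
      (volume.restrict (Ioi 0)) :=
    (by fun_prop : Measurable fun s : ℝ =>
      exp (-(v ^ 2 / (c * s))) * (√s * (s + 1))⁻¹).aestronglyMeasurable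
  have hnonneg : ∀ s ∈ Ioi (0 : ℝ), 0 ≤ exp (-(v ^ 2 / (c * s))) * (√s * (s + 1))⁻¹ :=
    fun s (hs : 0 < s) => by positivity
  have hg := ((intervalIntegral.intervalIntegrable_rpow' (r := -(1 / 2 : ℝ)) (by norm_num)
    (a := 0) (b := v ^ 2)).1).const_mul (c / v ^ 2)
  have hh := integrableOn_Ioi_rpow_of_lt (a := -(3 / 2 : ℝ)) (by norm_num) hv2
  have hle_g : ∀ s ∈ Ioc (0 : ℝ) (v ^ 2),
      exp (-(v ^ 2 / (c * s))) * (√s * (s + 1))⁻¹ ≤ c / v ^ 2 * s ^ (-(1 / 2 : ℝ)) := by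
    intro s ⟨hs, _⟩
    have hexp : exp (-(v ^ 2 / (c * s))) ≤ c / v ^ 2 * s := by
      refine (exp_neg_le_inv (by positivity)).trans_eq ?_
      field_simp
    calc exp (-(v ^ 2 / (c * s))) * (√s * (s + 1))⁻¹
        ≤ c / v ^ 2 * s * (√s * (s + 1))⁻¹ := by gcongr
      _ ≤ c / v ^ 2 * s ^ (-(1 / 2 : ℝ)) := by
        rw [mul_assoc]
        gcongr
        exact mul_inv_sqrt_mul_add_one_le_rpow_neg_half hs
  have hle_h : ∀ s ∈ Ioi (v ^ 2),
      exp (-(v ^ 2 / (c * s))) * (√s * (s + 1))⁻¹ ≤ s ^ (-(3 / 2 : ℝ)) := by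
    intro s hs
    have hs0 : 0 < s := hv2.trans hs
    calc exp (-(v ^ 2 / (c * s))) * (√s * (s + 1))⁻¹ ≤ 1 * (√s * (s + 1))⁻¹ := by
          gcongr
          exact exp_le_one_iff.2 (neg_nonpos.2 (by positivity))
      _ ≤ s ^ (-(3 / 2 : ℝ)) := by
          rw [one_mul]
          exact inv_sqrt_mul_add_one_le_rpow_neg_three_halves hs0
  refine ⟨integrableOn_Ioi_of_le_on_Ioc_Ioi hv2.le hmeas hnonneg hg hh hle_g hle_h, ?_⟩
  refine (setIntegral_Ioi_le_of_le_on_Ioc_Ioi hv2.le hmeas hnonneg hg hh hle_g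
    hle_h).trans_eq ?_
  rw [integral_const_mul, integral_Ioc_zero_rpow_neg_half hv2.le,
    integral_Ioi_rpow_neg_three_halves hv2, sqrt_sq hv.le]
  field_simp

lemma indicator_compl_add_mul_indicator_mem_Icc {α : Type*} (S : Set α) {c : ℝ}
    (hc : c ∈ Icc (0 : ℝ) 1) (x : α) :
    Sᶜ.indicator (fun _ => (1 : ℝ)) x + c * S.indicator (fun _ => (1 : ℝ)) x ∈ Icc (0 : ℝ) 1 := by
  by_cases hx : x ∈ S <;> simp [hx, hc.1, hc.2]

/-- Error-term integral bound in the first-moment computation of cluster level sets: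
the contribution of times `s` outside the window `[η v², v²/η]`, plus the contribution
inside the window penalized by `e^{-M}`, is at most
`C (e^{-v/2} + v⁻¹ (1 + e^{-M}/√η + √η))`. -/
theorem cluster_error_integral_bound :
    ∃ C : ℝ, 0 < C ∧ ∀ v η M : ℝ, 1 ≤ v → η ∈ Set.Ioc (0:ℝ) 1 → 0 ≤ M →
      (∫ s in Set.Ioi (0:ℝ),
          (Real.exp (-(v^2 / (16*s))) + Real.exp (-(v/2))) / (Real.sqrt s * (s+1)) *
            (Set.indicator (Set.Icc (η * v^2) (v^2 / η))ᶜ (fun _ => (1:ℝ)) s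
              + Real.exp (-M) * Set.indicator (Set.Icc (η * v^2) (v^2 / η)) (fun _ => (1:ℝ)) s))
        ≤ C * (Real.exp (-(v/2))
            + (1/v) * (1 + Real.exp (-M) / Real.sqrt η + Real.sqrt η)) := by
  refine ⟨34, by norm_num, fun v η M hv _ hM => ?_⟩
  have hv0 : 0 < v := by linarith
  have hweight := indicator_compl_add_mul_indicator_mem_Icc (Icc (η * v ^ 2) (v ^ 2 / η))
    ⟨(exp_pos (-M)).le, exp_le_one_iff.2 (neg_nonpos.2 hM)⟩
  obtain ⟨hA, hA_le⟩ := integrableOn_exp_neg_sq_div_mul_inv_sqrt_mul_add_one_and_integral_le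
    (by norm_num : (0 : ℝ) < 16) hv0
  obtain ⟨hk, hk_le⟩ := integrableOn_inv_sqrt_mul_add_one_and_integral_le
  calc _ ≤ ∫ s in Ioi (0 : ℝ), (exp (-(v ^ 2 / (16 * s))) * (√s * (s + 1))⁻¹
          + exp (-(v / 2)) * (√s * (s + 1))⁻¹) := by
        refine integral_mono_of_nonneg ?_ (hA.add (hk.const_mul _)) ?_ <;>
          filter_upwards [ae_restrict_mem measurableSet_Ioi] with s (hs : 0 < s)
        · exact mul_nonneg (by positivity) (hweight s).1
        · rw [← add_mul, ← div_eq_mul_inv]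
          exact mul_le_of_le_one_right (by positivity) (hweight s).2
    _ = (∫ s in Ioi (0 : ℝ), exp (-(v ^ 2 / (16 * s))) * (√s * (s + 1))⁻¹)
          + exp (-(v / 2)) * ∫ s in Ioi (0 : ℝ), (√s * (s + 1))⁻¹ := by
        rw [integral_add hA (hk.const_mul _), integral_const_mul]
    _ ≤ (2 * 16 + 2) / v + exp (-(v / 2)) * 4 := by gcongr
    _ ≤ 34 * (exp (-(v / 2)) + 1 / v * (1 + exp (-M) / √η + √η)) := by
        have : 0 ≤ 1 / v * (exp (-M) / √η + √η) := by positivity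
        have : 0 < exp (-(v / 2)) := exp_pos _
        rw [div_eq_mul_one_div _ v]
        nlinarith
end

section
/- Let ĥ_t(X_t) be Gaussian with mean −m_t and variance t, where m_t = √2 t − (3/(2√2))·log⁺ t, and fix η > 0. Then there is a constant C = C(η) such that for all v with v ≥ (−√8 + η)·t, ∫_v^u exp(−√2·w − w²/(4t))·(u − w + 1) dw ≤ C·(u − v + 1)²·e^{−v²/(4t) − √2·v} for all u ≥ v, while for v < (−√8 + η)·t the same integral is bounded by C·(u − v + 1)²·e^{(2+η)·t}. -/
open Real MeasureTheory

/-- Generic step: if the exponent is bounded by `E` on `(v, u]`, then the integral is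
bounded by `(u - v + 1)^2 * exp E`. -/
lemma integral_bound_aux (t u v E : ℝ) (hvu : v ≤ u)
    (hE : ∀ w, v < w → w ≤ u → -(Real.sqrt 2 * w) - w^2 / (4*t) ≤ E) :
    (∫ w in v..u, Real.exp (-(Real.sqrt 2 * w) - w^2 / (4*t)) * (u - w + 1))
      ≤ (u - v + 1)^2 * Real.exp E := by
  have key : ∀ w ∈ Set.uIoc v u,
      ‖Real.exp (-(Real.sqrt 2 * w) - w^2/(4*t)) * (u - w + 1)‖
        ≤ Real.exp E * (u - v + 1) := by
    intro w hw
    rw [Set.uIoc_of_le hvu] at hw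
    obtain ⟨hw1, hw2⟩ := hw
    rw [Real.norm_eq_abs, abs_of_nonneg (mul_nonneg (Real.exp_nonneg _) (by linarith))]
    exact mul_le_mul (Real.exp_le_exp.2 (hE w hw1 hw2)) (by linarith) (by linarith)
      (Real.exp_nonneg _)
  have h := intervalIntegral.norm_integral_le_of_norm_le_const key
  rw [abs_of_nonneg (by linarith : (0:ℝ) ≤ u - v)] at h
  calc (∫ w in v..u, Real.exp (-(Real.sqrt 2 * w) - w^2 / (4*t)) * (u - w + 1))
      ≤ ‖∫ w in v..u, Real.exp (-(Real.sqrt 2 * w) - w^2 / (4*t)) * (u - w + 1)‖ :=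
        le_abs_self _
    _ ≤ Real.exp E * (u - v + 1) * (u - v) := h
    _ ≤ (u - v + 1)^2 * Real.exp E := by
        nlinarith [mul_nonneg (Real.exp_nonneg E) (show (0:ℝ) ≤ u - v + 1 by linarith)]

/-- Bound for the integral `∫_v^u e^{-√2 w - w²/(4t)} (u-w+1) dw` appearing in the
first-moment computation: the exponent is maximized at `w = -√8 t`, so for
`v ≥ (-√8 + η) t` the integral is at most `C (u-v+1)² e^{-v²/(4t) - √2 v}`, while for
`v < (-√8 + η) t` it is at most `C (u-v+1)² e^{(2+η) t}`. -/
theorem first_moment_integral_bound (η : ℝ) (hη : 0 < η) :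
    ∃ C : ℝ, 0 < C ∧ ∀ t u v : ℝ, 0 < t → v ≤ u →
      ((-Real.sqrt 8 + η) * t ≤ v →
        (∫ w in v..u, Real.exp (-(Real.sqrt 2 * w) - w^2 / (4*t)) * (u - w + 1))
          ≤ C * (u - v + 1)^2 * Real.exp (-(v^2 / (4*t)) - Real.sqrt 2 * v)) ∧
      (v < (-Real.sqrt 8 + η) * t →
        (∫ w in v..u, Real.exp (-(Real.sqrt 2 * w) - w^2 / (4*t)) * (u - w + 1))
          ≤ C * (u - v + 1)^2 * Real.exp ((2 + η) * t)) := by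
  refine ⟨1, one_pos, fun t u v ht hvu => ?_⟩
  have h4t : (0:ℝ) < 4 * t := by linarith
  have s2 : Real.sqrt 2 ^ 2 = 2 := Real.sq_sqrt (by norm_num)
  have s8 : Real.sqrt 8 = 2 * Real.sqrt 2 := by
    rw [show (8:ℝ) = 2^2 * 2 by norm_num, Real.sqrt_mul (by positivity),
      Real.sqrt_sq (by norm_num)]
  constructor
  · intro hv
    rw [s8] at hv
    have h := integral_bound_aux t u v (-(v^2 / (4*t)) - Real.sqrt 2 * v) hvu ?_
    · linarith
    · intro w hw1 hw2
      rw [← mul_le_mul_iff_of_pos_right h4t]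
      have hwv : v ≤ w := le_of_lt hw1
      field_simp
      nlinarith [mul_nonneg (sub_nonneg.2 hwv)
        (show (0:ℝ) ≤ w + v + 4 * Real.sqrt 2 * t by nlinarith [mul_pos hη ht]),
        mul_pos ht ht]
  · intro hv
    have h := integral_bound_aux t u v ((2 + η) * t) hvu ?_
    · linarith
    · intro w hw1 hw2
      rw [← mul_le_mul_iff_of_pos_right h4t]
      field_simp
      nlinarith [sq_nonneg (w + 2 * Real.sqrt 2 * t), mul_pos ht ht, mul_pos hη (mul_pos ht ht)]
end
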